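/- arXiv:2404.06465 — 4 statements merged into one kernel-verified Lean document; each statement's English description precedes it below -/
import Mathlib

section
/- (Downward energy transfer for Lorenz '96.) Let x ∈ ℝ^d, x ≠ 0, and suppose for some j (mod d) there are constants c₁ > c₂ > 0 with |x_j| ≥ c₁|x| and |x_{j−1}| ≤ c₂ h |x|, and |x_{j−2}| ≥ c₃ > 0. Let τ ~ Exp(1/h) with h ∈ (0, h*] where h* < π/12 satisfies the smallness conditions of the paper. Then with probability at least e^{−3/c₃}/2, the flow along V_{j−1} satisfies |π_{j−1}(φ_τ^{j−1}(x))| ≥ (c₁ − c₂) h |x| = (c₁ − c₂) h |φ_τ^{j−1}(x)|. -/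
open Real MeasureTheory ProbabilityTheory

/-- The Euclidean norm of a vector indexed by `ZMod d`. -/
noncomputable def zNorm {d : ℕ} [NeZero d] (x : ZMod d → ℝ) : ℝ :=
  Real.sqrt (∑ i, x i ^ 2)

/-- The flow of the Lorenz '96 vector field
`V_{j-1}(x) = x_j x_{j-2} e_{j-1} − x_{j-1} x_{j-2} e_j`: a rotation in the
`(x_{j-1}, x_j)`-plane with angular speed `|x_{j-2}|`. -/
noncomputable def lorenzRotFlow {d : ℕ} [NeZero d] (j : ZMod d) (t : ℝ)
    (x : ZMod d → ℝ) : ZMod d → ℝ := fun i =>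
  if i = j - 1 then
    x (j - 1) * Real.cos (|x (j - 2)| * t)
      + Real.sign (x (j - 2)) * x j * Real.sin (|x (j - 2)| * t)
  else if i = j then
    x j * Real.cos (|x (j - 2)| * t)
      - Real.sign (x (j - 2)) * x (j - 1) * Real.sin (|x (j - 2)| * t)
  else x i

/-! Along `V_{j-1}` the coordinate `x_{j-1}` evolves as
`x_{j-1} cos (x_{j-2} t) + x_j sin (x_{j-2} t)`, so it stays of size at least `(c₁ - c₂) h |x|`
whenever `|sin (|x_{j-2}| t)| ≥ h`. By the choice of `h`, the other times `t ≥ 0` lie within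
`ε = 3h / |x_{j-2}|` of the lattice `p ℕ`, `p = π / |x_{j-2}|`. Under `Exp(1/h)` the window
around `0` has mass `1 - e^{-ε/h}`, and since `p ≥ 4ε` the windows around `p, 2p, …` form a
geometric series of total mass at most `e^{-ε/h} / 2`; this leaves probability at least
`e^{-ε/h} / 2 = e^{-3/|x_{j-2}|} / 2` for the good times. -/

lemma Real.sign_mul_sin_abs_mul (a t : ℝ) : Real.sign a * sin (|a| * t) = sin (a * t) := by
  rcases lt_trichotomy a 0 with ha | rfl | ha
  · rw [Real.sign_of_neg ha, abs_of_neg ha, neg_mul a, sin_neg]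
    ring
  · simp
  · rw [Real.sign_of_pos ha, abs_of_pos ha, one_mul]

lemma Real.cos_abs_mul (a t : ℝ) : cos (|a| * t) = cos (a * t) := by
  rcases abs_choice a with ha | ha <;> simp [ha]

lemma Real.abs_sin_abs_mul (a t : ℝ) : |sin (|a| * t)| = |sin (a * t)| := by
  rcases abs_choice a with ha | ha <;> simp [ha]

lemma ZMod.sub_one_ne_self {d : ℕ} [Nontrivial (ZMod d)] (j : ZMod d) : j - 1 ≠ j :=
  fun h => one_ne_zero (sub_eq_self.1 h)

section LorenzFlow

variable {d : ℕ} [NeZero d] (j : ZMod d) (t : ℝ) (x : ZMod d → ℝ)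

lemma lorenzRotFlow_apply_sub_one :
    lorenzRotFlow j t x (j - 1) = x (j - 1) * cos (x (j - 2) * t) + x j * sin (x (j - 2) * t) := by
  simp only [lorenzRotFlow, if_pos, mul_assoc, mul_left_comm _ (x j), Real.sign_mul_sin_abs_mul,
    Real.cos_abs_mul]

lemma lorenzRotFlow_apply_self [Nontrivial (ZMod d)] :
    lorenzRotFlow j t x j = x j * cos (x (j - 2) * t) - x (j - 1) * sin (x (j - 2) * t) := by
  simp only [lorenzRotFlow, if_neg (ZMod.sub_one_ne_self j).symm, if_pos, mul_assoc,
    mul_left_comm _ (x (j - 1)), Real.sign_mul_sin_abs_mul, Real.cos_abs_mul]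

lemma lorenzRotFlow_apply_of_ne {i : ZMod d} (hi₁ : i ≠ j - 1) (hi : i ≠ j) :
    lorenzRotFlow j t x i = x i := by
  simp only [lorenzRotFlow, if_neg hi₁, if_neg hi]

lemma zNorm_lorenzRotFlow [Nontrivial (ZMod d)] : zNorm (lorenzRotFlow j t x) = zNorm x := by
  have hsum : ∑ i, (lorenzRotFlow j t x i ^ 2 - x i ^ 2) = 0 := by
    rw [Fintype.sum_eq_add (j - 1) j (ZMod.sub_one_ne_self j) fun i hi => by
      rw [lorenzRotFlow_apply_of_ne j t x hi.1 hi.2, sub_self]]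
    rw [lorenzRotFlow_apply_sub_one, lorenzRotFlow_apply_self]
    linear_combination (x (j - 1) ^ 2 + x j ^ 2) * sin_sq_add_cos_sq (x (j - 2) * t)
  rw [Finset.sum_sub_distrib, sub_eq_zero] at hsum
  rw [zNorm, zNorm, hsum]

end LorenzFlow

lemma le_abs_mul_cos_add_mul_sin {p q θ c₁ c₂ h N : ℝ} (hh : 0 ≤ h) (hp : c₁ * N ≤ |p|)
    (hq : |q| ≤ c₂ * h * N) (hθ : h ≤ |sin θ|) :
    (c₁ - c₂) * h * N ≤ |q * cos θ + p * sin θ| := by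
  have hsin : c₁ * N * h ≤ |p * sin θ| := by
    rw [abs_mul]; exact mul_le_mul hp hθ hh (abs_nonneg p)
  have hcos : |q * cos θ| ≤ |q| := by
    rw [abs_mul]; exact mul_le_of_le_one_right (abs_nonneg q) (abs_cos_le_one θ)
  have := abs_sub_abs_le_abs_add (p * sin θ) (q * cos θ)
  rw [add_comm] at this
  linarith

/-- The left side is the geometric tail `∑_{m ≥ 1} (e^x - e^{-x}) e^{-m y}`. -/
lemma sinh_mul_geometric_tail_le {x y : ℝ} (hy : 0 < y) (hxy : 4 * x ≤ y) :
    (exp x - exp (-x)) * (exp (-y) / (1 - exp (-y))) ≤ exp (-x) / 2 := by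
  have hb : 1 < exp y := one_lt_exp_iff.2 hy
  have hab : exp x ^ 4 ≤ exp y := by
    rw [← exp_nat_mul]; exact exp_le_exp.2 (by push_cast; linarith)
  have hq : exp (-y) / (1 - exp (-y)) = 1 / (exp y - 1) := by
    rw [exp_neg]; field_simp
  rw [hq, exp_neg, ← div_eq_mul_one_div, div_le_div_iff₀ (by linarith) two_pos]
  have ha := exp_pos x
  rw [← sub_nonneg]
  -- with `a = e^x` this is `2 (a² - 1) ≤ e^y - 1`, from `a⁴ ≤ e^y` and `(a² - 1)² ≥ 0`
  have hsq : 0 ≤ (exp x ^ 2 - 1) ^ 2 / exp x := by positivity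
  convert add_nonneg hsq (div_nonneg (sub_nonneg.2 hab) ha.le) using 1
  field_simp
  ring

namespace ProbabilityTheory

variable {r : ℝ}

lemma expMeasure_Iic (hr : 0 < r) {b : ℝ} (hb : 0 ≤ b) :
    expMeasure r (Set.Iic b) = ENNReal.ofReal (1 - exp (-(r * b))) := by
  have := isProbabilityMeasure_expMeasure hr
  rw [← ofReal_cdf, cdf_expMeasure_eq hr, if_pos hb]

lemma expMeasure_Ioo_le (hr : 0 < r) {a b : ℝ} (ha : 0 ≤ a) (hab : a ≤ b) :
    expMeasure r (Set.Ioo a b) ≤ ENNReal.ofReal (exp (-(r * a)) - exp (-(r * b))) := by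
  have := isProbabilityMeasure_expMeasure hr
  calc expMeasure r (Set.Ioo a b) ≤ expMeasure r (Set.Ioc a b) :=
        measure_mono Set.Ioo_subset_Ioc_self
    _ = _ := by
      rw [← measure_cdf (expMeasure r), StieltjesFunction.measure_Ioc, cdf_expMeasure_eq hr,
        cdf_expMeasure_eq hr, if_pos ha, if_pos (ha.trans hab)]
      ring_nf

lemma compl_setOf_far_from_nat_mul_subset {p ε : ℝ} (hε : 0 ≤ ε) :
    {t : ℝ | 0 ≤ t ∧ ∀ k : ℕ, ε ≤ |t - k * p|}ᶜ ⊆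
      Set.Iic ε ∪ ⋃ m : ℕ, Set.Ioo ((m + 1) * p - ε) ((m + 1) * p + ε) := by
  intro t ht
  simp only [Set.mem_compl_iff, Set.mem_ofPred_eq, not_and_or, not_le, not_forall] at ht
  rcases ht with ht | ⟨k | m, hk⟩
  · exact Or.inl (ht.le.trans hε)
  · simp only [CharP.cast_eq_zero, zero_mul, sub_zero] at hk
    exact Or.inl ((le_abs_self t).trans hk.le)
  · rw [abs_lt] at hk
    push_cast at hk
    exact Or.inr (Set.mem_iUnion.2 ⟨m, by linarith, by linarith⟩)

lemma expMeasure_iUnion_Ioo_nat_mul_le (hr : 0 < r) {p ε : ℝ} (hp : 0 < p) (hε : 0 ≤ ε)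
    (hεp : ε ≤ p) :
    expMeasure r (⋃ m : ℕ, Set.Ioo ((m + 1) * p - ε) ((m + 1) * p + ε)) ≤
      ENNReal.ofReal
        ((exp (r * ε) - exp (-(r * ε))) * (exp (-(r * p)) / (1 - exp (-(r * p))))) := by
  set q := exp (-(r * p))
  set C := exp (r * ε) - exp (-(r * ε))
  have hwindow (m : ℕ) : expMeasure r (Set.Ioo ((m + 1) * p - ε) ((m + 1) * p + ε)) ≤
      ENNReal.ofReal (C * q ^ (m + 1)) := by
    have hm : p ≤ (m + 1) * p :=
      le_mul_of_one_le_left hp.le (by linarith [Nat.cast_nonneg (α := ℝ) m])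
    refine (expMeasure_Ioo_le hr (by linarith) (by linarith)).trans_eq ?_
    rw [← exp_nat_mul, sub_mul, ← exp_add, ← exp_add]
    push_cast
    ring_nf
  have hq : q < 1 := exp_lt_one_iff.2 (by nlinarith)
  have hgeom : HasSum (fun m : ℕ => C * q ^ (m + 1)) (C * (q / (1 - q))) := by
    rw [show C * (q / (1 - q)) = C * q * (1 - q)⁻¹ by ring,
      show (fun m : ℕ => C * q ^ (m + 1)) = fun m => C * q * q ^ m by funext m; ring]
    exact (hasSum_geometric_of_lt_one (exp_pos _).le hq).mul_left (C * q)
  have hC : 0 ≤ C := sub_nonneg.2 (exp_le_exp.2 (by nlinarith))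
  calc _ ≤ ∑' m : ℕ, expMeasure r (Set.Ioo ((m + 1) * p - ε) ((m + 1) * p + ε)) :=
        measure_iUnion_le _
    _ ≤ ∑' m : ℕ, ENNReal.ofReal (C * q ^ (m + 1)) := ENNReal.tsum_le_tsum hwindow
    _ = _ := by
      rw [← hgeom.tsum_eq, ENNReal.ofReal_tsum_of_nonneg (fun m => by positivity) hgeom.summable]

lemma ofReal_exp_div_two_le_expMeasure_far_from_nat_mul (hr : 0 < r) {p ε : ℝ} (hε : 0 < ε)
    (hεp : 4 * ε ≤ p) :
    ENNReal.ofReal (exp (-(r * ε)) / 2) ≤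
      expMeasure r {t | 0 ≤ t ∧ ∀ k : ℕ, ε ≤ |t - k * p|} := by
  have := isProbabilityMeasure_expMeasure hr
  set G := {t : ℝ | 0 ≤ t ∧ ∀ k : ℕ, ε ≤ |t - k * p|}
  have hexp : exp (-(r * ε)) ≤ 1 := exp_le_one_iff.2 (by nlinarith)
  have htail := sinh_mul_geometric_tail_le (x := r * ε) (y := r * p) (by nlinarith) (by nlinarith)
  have hbad : expMeasure r Gᶜ ≤ ENNReal.ofReal (1 - exp (-(r * ε)) / 2) := calc
    expMeasure r Gᶜ ≤ expMeasure r (Set.Iic ε) +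
        expMeasure r (⋃ m : ℕ, Set.Ioo ((m + 1) * p - ε) ((m + 1) * p + ε)) :=
      (measure_mono (compl_setOf_far_from_nat_mul_subset hε.le)).trans (measure_union_le _ _)
    _ ≤ ENNReal.ofReal (1 - exp (-(r * ε))) + ENNReal.ofReal ((exp (r * ε) - exp (-(r * ε))) *
          (exp (-(r * p)) / (1 - exp (-(r * p))))) := by
      rw [expMeasure_Iic hr hε.le]
      gcongr
      exact expMeasure_iUnion_Ioo_nat_mul_le hr (by linarith) hε.le (by linarith)
    _ ≤ ENNReal.ofReal (1 - exp (-(r * ε))) + ENNReal.ofReal (exp (-(r * ε)) / 2) := by gcongr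
    _ = ENNReal.ofReal (1 - exp (-(r * ε)) / 2) := by
      rw [← ENNReal.ofReal_add (by linarith) (by positivity)]
      ring_nf
  refine ENNReal.le_of_add_le_add_right (a := ENNReal.ofReal (1 - exp (-(r * ε)) / 2))
    ENNReal.ofReal_ne_top ?_
  calc _ = expMeasure r Set.univ := by
        rw [← ENNReal.ofReal_add (by positivity) (by linarith), add_sub_cancel, ENNReal.ofReal_one,
          measure_univ]
    _ ≤ expMeasure r G + expMeasure r Gᶜ := by
      rw [← Set.union_compl_self G]; exact measure_union_le _ _
    _ ≤ _ := by gcongr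

end ProbabilityTheory

theorem lorenz_downward_transfer_general (d : ℕ) [NeZero d] (hd : 4 ≤ d)
    (h : ℝ) (hh : 0 < h) (hhπ : h < Real.pi / 12)
    (hsin : ∀ y : ℝ, 0 ≤ y → |Real.sin y| ≤ h → ∃ k : ℕ, |y - k * Real.pi| < 3 * h)
    (x : ZMod d → ℝ) (j : ZMod d)
    (c₁ c₂ c₃ : ℝ) (hc₃ : c₃ > 0)
    (hxj : |x j| ≥ c₁ * zNorm x)
    (hxjm1 : |x (j - 1)| ≤ c₂ * h * zNorm x)
    (hxjm2 : |x (j - 2)| ≥ c₃) :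
    (∀ t : ℝ, zNorm (lorenzRotFlow j t x) = zNorm x) ∧
    ENNReal.ofReal (Real.exp (-3 / c₃) / 2) ≤
      expMeasure (1 / h)
        {t : ℝ | (c₁ - c₂) * h * zNorm x ≤ |lorenzRotFlow j t x (j - 1)|} := by
  have : Fact (1 < d) := ⟨by omega⟩
  refine ⟨fun t => zNorm_lorenzRotFlow j t x, ?_⟩
  set ω := |x (j - 2)|
  have hω : 0 < ω := hc₃.trans_le hxjm2
  have hsin_ge (t : ℝ) (ht : 0 ≤ t) (hgap : ∀ k : ℕ, 3 * h / ω ≤ |t - k * (π / ω)|) :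
      h ≤ |sin (x (j - 2) * t)| := by
    rw [← Real.abs_sin_abs_mul]
    by_contra! hsmall
    obtain ⟨k, hk⟩ := hsin (ω * t) (by positivity) hsmall.le
    rw [show ω * t - k * π = ω * (t - k * (π / ω)) by field_simp, abs_mul, abs_of_pos hω] at hk
    exact (hgap k).not_gt (by rwa [lt_div_iff₀ hω, mul_comm])
  calc ENNReal.ofReal (exp (-3 / c₃) / 2)
        ≤ ENNReal.ofReal (exp (-(1 / h * (3 * h / ω))) / 2) := by
        gcongr
        rw [show 1 / h * (3 * h / ω) = 3 / ω by field_simp, neg_div]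
        exact neg_le_neg (div_le_div_of_nonneg_left (by norm_num) hc₃ hxjm2)
    _ ≤ expMeasure (1 / h) {t | 0 ≤ t ∧ ∀ k : ℕ, 3 * h / ω ≤ |t - k * (π / ω)|} :=
        ofReal_exp_div_two_le_expMeasure_far_from_nat_mul (by positivity) (by positivity)
          (by rw [← mul_div_assoc, div_le_div_iff_of_pos_right hω]; linarith)
    _ ≤ _ := measure_mono fun t ⟨ht, hgap⟩ => by
        rw [Set.mem_ofPred_eq, lorenzRotFlow_apply_sub_one]
        exact le_abs_mul_cos_add_mul_sin hh.le hxj hxjm1 (hsin_ge t ht hgap)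

/-- Lemma 4.2 (downward energy transfer for Lorenz '96): if `|x_j| ≥ c₁|x|`,
`|x_{j-1}| ≤ c₂ h |x|` and `|x_{j-2}| ≥ c₃ > 0`, then for `τ ~ Exp(1/h)` with
`h` small, with probability at least `e^{−3/c₃}/2` we have
`|π_{j-1}(φ_τ^{j-1}(x))| ≥ (c₁ − c₂) h |x| = (c₁ − c₂) h |φ_τ^{j-1}(x)|`. -/
theorem lorenz_downward_transfer (d : ℕ) [NeZero d] (hd : 4 ≤ d)
    (h : ℝ) (hh : 0 < h) (hhπ : h < Real.pi / 12)
    (hsin : ∀ y : ℝ, 0 ≤ y → |Real.sin y| ≤ h → ∃ k : ℕ, |y - k * Real.pi| < 3 * h)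
    (hexp6 : Real.exp (-6 * h) ≥ 3 / 4)
    (hexp5 : 1 - Real.exp (-5 * h) - 3 * h * Real.exp (-5 * h) ≥ h)
    (x : ZMod d → ℝ) (hx : x ≠ 0) (j : ZMod d)
    (c₁ c₂ c₃ : ℝ) (hc : c₁ > c₂) (hc₂ : c₂ > 0) (hc₃ : c₃ > 0)
    (hxj : |x j| ≥ c₁ * zNorm x)
    (hxjm1 : |x (j - 1)| ≤ c₂ * h * zNorm x)
    (hxjm2 : |x (j - 2)| ≥ c₃) :
    (∀ t : ℝ, zNorm (lorenzRotFlow j t x) = zNorm x) ∧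
    ENNReal.ofReal (Real.exp (-3 / c₃) / 2) ≤
      expMeasure (1 / h)
        {t : ℝ | (c₁ - c₂) * h * zNorm x ≤ |lorenzRotFlow j t x (j - 1)|} :=
  lorenz_downward_transfer_general d hd h hh hhπ hsin x j c₁ c₂ c₃ hc₃ hxj hxjm1 hxjm2
end

section
/- Let a ≥ c₃ > 0 and τ ~ Exp(1/h) with 0 < h < π/12. Then the probability that a·τ lies outside all intervals [kπ − 3h, kπ + 3h] (k = 0,1,2,…), i.e. P(∪_k {|aτ − kπ| ≤ 3h})ᶜ, equals (e^{−3/a} − e^{3/a − π/(ha)})/(1 − e^{−π/(ha)}), and this quantity is bounded below by e^{−3/c₃}/2. -/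
/-!
Since `τ ≥ 0` almost surely, `a τ` avoids the intervals `[kπ - 3h, kπ + 3h]` exactly when `τ` lies
in one of the disjoint gaps `((kπ + 3h)/a, ((k + 1)π - 3h)/a)`. The exponential law gives the `k`-th
gap the mass `(e - q/e) qᵏ` with `e = exp (-3/a)` and `q = exp (-π/(ha))`, and summing the geometric
series gives the formula. For the lower bound, `12h < π` gives `q ≤ e⁴`, which is what makes
`(e - q/e)/(1 - q) ≥ e/2 ≥ exp (-3/c₃)/2`.
-/

open Real MeasureTheory ProbabilityTheory Set

namespace ProbabilityTheory

instance nullSingletonClass_expMeasure (r : ℝ) : NullSingletonClass (expMeasure r) :=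
  ⟨fun x => withDensity_absolutelyContinuous _ _ (measure_singleton x)⟩

lemma expMeasure_Iio_zero (r : ℝ) : expMeasure r (Iio 0) = 0 := by
  rw [expMeasure, gammaMeasure, withDensity_apply _ measurableSet_Iio]
  exact lintegral_gammaPDF_of_nonpos le_rfl

lemma expMeasure_Ioo {r l u : ℝ} (hr : 0 < r) (hl : 0 ≤ l) (hlu : l ≤ u) :
    expMeasure r (Ioo l u) = ENNReal.ofReal (exp (-(r * l)) - exp (-(r * u))) := by
  have := isProbabilityMeasure_expMeasure hr
  rw [measure_congr Ioo_ae_eq_Ioc, ← measure_cdf (expMeasure r), StieltjesFunction.measure_Ioc,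
    cdf_expMeasure_eq hr, cdf_expMeasure_eq hr, if_pos (hl.trans hlu), if_pos hl]
  ring_nf

end ProbabilityTheory

lemma forall_lt_abs_sub_nat_mul_iff {p δ x : ℝ} (hp : 0 < p) (hx : 0 ≤ x) :
    (∀ k : ℕ, δ < |x - k * p|) ↔ ∃ k : ℕ, k * p + δ < x ∧ x < (k + 1) * p - δ := by
  constructor
  · intro h
    set k := ⌊x / p⌋₊
    have hk : k * p ≤ x := (le_div_iff₀ hp).1 (Nat.floor_le (div_nonneg hx hp.le))
    have hk' : x < (k + 1) * p := (div_lt_iff₀ hp).1 (Nat.lt_floor_add_one _)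
    have h₀ := h k
    have h₁ := h (k + 1)
    rw [abs_of_nonneg (sub_nonneg.2 hk)] at h₀
    rw [Nat.cast_succ, abs_of_neg (sub_neg.2 hk')] at h₁
    exact ⟨k, by linarith, by linarith⟩
  · rintro ⟨k, hkx, hxk⟩ j
    rcases le_or_gt j k with hjk | hkj
    · have : (j : ℝ) * p ≤ k * p := by gcongr
      exact lt_abs.2 (Or.inl (by linarith))
    · have : ((k : ℝ) + 1) * p ≤ j * p := by gcongr; exact_mod_cast hkj
      exact lt_abs.2 (Or.inr (by linarith))

lemma compl_iUnion_abs_sub_nat_mul_le_inter_Ici {a p δ : ℝ} (ha : 0 < a) (hp : 0 < p)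
    (hδ : 0 ≤ δ) :
    (⋃ k : ℕ, {t : ℝ | |a * t - k * p| ≤ δ})ᶜ ∩ Ici 0
      = ⋃ k : ℕ, Ioo ((k * p + δ) / a) (((k + 1) * p - δ) / a) := by
  ext t
  simp only [mem_inter_iff, mem_compl_iff, mem_iUnion, mem_ofPred_eq, not_exists, not_le,
    mem_Ici, mem_Ioo, div_lt_iff₀ ha, lt_div_iff₀ ha, mul_comm t a]
  constructor
  · rintro ⟨h, ht⟩
    exact (forall_lt_abs_sub_nat_mul_iff hp (by positivity)).1 h
  · rintro ⟨k, hkt, htk⟩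
    have hat : 0 < a * t := by
      have : (0 : ℝ) ≤ k * p + δ := by positivity
      linarith
    exact ⟨(forall_lt_abs_sub_nat_mul_iff hp hat.le).2 ⟨k, hkt, htk⟩,
      (pos_of_mul_pos_right hat ha.le).le⟩

lemma pairwise_disjoint_Ioo_nat_mul {a p δ : ℝ} (ha : 0 < a) (hp : 0 ≤ p) (hδ : 0 ≤ δ) :
    Pairwise (Function.onFun Disjoint
      fun k : ℕ => Ioo ((k * p + δ) / a) (((k + 1) * p - δ) / a)) := by
  have hmono : Monotone fun k : ℕ => k * p / a := fun i j hij =>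
    div_le_div_of_nonneg_right (mul_le_mul_of_nonneg_right (Nat.cast_le.2 hij) hp) ha.le
  have hsub : ∀ k : ℕ, Ioo ((k * p + δ) / a) (((k + 1) * p - δ) / a)
      ⊆ Ioo (k * p / a) ((Order.succ k : ℕ) * p / a) := fun k => by
    rw [Order.succ_eq_add_one, Nat.cast_add_one]
    exact Ioo_subset_Ioo (by gcongr; linarith) (by gcongr; linarith)
  exact hmono.pairwise_disjoint_on_Ioo_succ.mono fun i j hij => hij.mono (hsub i) (hsub j)

lemma exp_sub_exp_eq_mul_pow (c p δ : ℝ) (k : ℕ) :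
    exp (-(c * (k * p + δ))) - exp (-(c * ((k + 1) * p - δ)))
      = (exp (-(c * δ)) - exp (-(c * (p - δ)))) * exp (-(c * p)) ^ k := by
  rw [← exp_nat_mul, sub_mul, ← exp_add, ← exp_add]
  ring_nf

theorem expMeasure_compl_iUnion_abs_sub_nat_mul_le {r a p δ : ℝ} (hr : 0 < r) (ha : 0 < a)
    (hδ : 0 ≤ δ) (hδp : 2 * δ < p) :
    expMeasure r (⋃ k : ℕ, {t : ℝ | |a * t - k * p| ≤ δ})ᶜ
      = ENNReal.ofReal ((exp (-(r / a * δ)) - exp (-(r / a * (p - δ))))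
          / (1 - exp (-(r / a * p)))) := by
  have hp : 0 < p := by linarith
  set q := exp (-(r / a * p))
  have hq0 : 0 ≤ q := (exp_pos _).le
  have hq1 : q < 1 := exp_lt_one_iff.2 (by simp only [neg_neg_iff_pos]; positivity)
  set C := exp (-(r / a * δ)) - exp (-(r / a * (p - δ)))
  have hC : 0 ≤ C := sub_nonneg.2 (exp_le_exp.2 (by gcongr; linarith))
  have hterm : ∀ k : ℕ, expMeasure r (Ioo ((k * p + δ) / a) (((k + 1) * p - δ) / a))
      = ENNReal.ofReal (C * q ^ k) := fun k => by
    rw [expMeasure_Ioo hr (by positivity) (by gcongr; linarith), ← exp_sub_exp_eq_mul_pow]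
    ring_nf
  rw [← measure_inter_conull (t := Ici 0) (by rw [compl_Ici]; exact expMeasure_Iio_zero r),
    compl_iUnion_abs_sub_nat_mul_le_inter_Ici ha hp hδ,
    measure_iUnion (pairwise_disjoint_Ioo_nat_mul ha hp.le hδ) fun _ => measurableSet_Ioo]
  simp only [hterm]
  rw [← ENNReal.ofReal_tsum_of_nonneg (fun k => by positivity)
      ((summable_geometric_of_lt_one hq0 hq1).mul_left C),
    tsum_mul_left, tsum_geometric_of_lt_one hq0 hq1, div_eq_mul_inv]

lemma div_two_le_sub_div_div_one_sub {e q : ℝ} (he : 0 < e) (he1 : e ≤ 1) (hq1 : q < 1)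
    (hq : q ≤ e ^ 4) : e / 2 ≤ (e - q / e) / (1 - q) := by
  have hsub : e - q / e = (e ^ 2 - q) / e := by field_simp
  rw [div_le_div_iff₀ two_pos (by linarith), hsub, div_mul_eq_mul_div, le_div_iff₀ he]
  -- `2 (e² - q) - e² (1 - q)` is decreasing in `q` and equals `e² (1 - e²)² ≥ 0` at `q = e⁴`.
  nlinarith [mul_nonneg (sub_nonneg.2 hq) (by nlinarith : (0 : ℝ) ≤ 2 - e ^ 2),
    sq_nonneg (e * (1 - e ^ 2))]

theorem ofReal_exp_div_two_le_expMeasure_compl_iUnion {r a p δ : ℝ} (hr : 0 < r) (ha : 0 < a)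
    (hδ : 0 < δ) (hδp : 4 * δ ≤ p) :
    ENNReal.ofReal (exp (-(r / a * δ)) / 2)
      ≤ expMeasure r (⋃ k : ℕ, {t : ℝ | |a * t - k * p| ≤ δ})ᶜ := by
  have hc : 0 < r / a := div_pos hr ha
  rw [expMeasure_compl_iUnion_abs_sub_nat_mul_le hr ha hδ.le (by linarith)]
  refine ENNReal.ofReal_le_ofReal ?_
  have hquot : exp (-(r / a * (p - δ))) = exp (-(r / a * p)) / exp (-(r / a * δ)) := by
    rw [← exp_sub]
    ring_nf
  rw [hquot]
  refine div_two_le_sub_div_div_one_sub (exp_pos _) (exp_le_one_iff.2 ?_)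
    (exp_lt_one_iff.2 ?_) ?_
  · simp only [neg_nonpos]; positivity
  · simp only [neg_neg_iff_pos]; nlinarith
  · rw [← exp_nat_mul, exp_le_exp]
    push_cast
    nlinarith

/-- The probability computation in Lemma 4.2: for `τ ~ Exp(1/h)` with
`0 < h < π/12` and `a ≥ c₃ > 0`, the probability that `a·τ` avoids all the
intervals `[kπ − 3h, kπ + 3h]` (`k ∈ ℕ`) equals
`(e^{−3/a} − e^{3/a − π/(ha)})/(1 − e^{−π/(ha)})`, and is at least `e^{−3/c₃}/2`. -/
theorem exp_avoid_multiples_pi (a c₃ h : ℝ) (hc₃ : 0 < c₃) (ha : c₃ ≤ a)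
    (hh : 0 < h) (hhπ : h < Real.pi / 12) :
    expMeasure (1 / h) (⋃ k : ℕ, {t : ℝ | |a * t - k * Real.pi| ≤ 3 * h})ᶜ
      = ENNReal.ofReal
          ((Real.exp (-3 / a) - Real.exp (3 / a - Real.pi / (h * a))) /
            (1 - Real.exp (-Real.pi / (h * a)))) ∧
    ENNReal.ofReal (Real.exp (-3 / c₃) / 2) ≤
      expMeasure (1 / h) (⋃ k : ℕ, {t : ℝ | |a * t - k * Real.pi| ≤ 3 * h})ᶜ := by
  have ha₀ : 0 < a := hc₃.trans_le ha
  have hrδ : -(1 / h / a * (3 * h)) = -3 / a := by field_simp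
  have hrpδ : -(1 / h / a * (π - 3 * h)) = 3 / a - π / (h * a) := by field_simp; ring
  have hrp : -(1 / h / a * π) = -π / (h * a) := by field_simp
  constructor
  · rw [expMeasure_compl_iUnion_abs_sub_nat_mul_le (by positivity) ha₀ (by positivity)
      (by linarith), hrδ, hrpδ, hrp]
  · calc ENNReal.ofReal (exp (-3 / c₃) / 2)
          ≤ ENNReal.ofReal (exp (-(1 / h / a * (3 * h))) / 2) := by
          rw [hrδ, neg_div, neg_div]
          gcongr
      _ ≤ _ := ofReal_exp_div_two_le_expMeasure_compl_iUnion (by positivity) ha₀ (by positivity)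
          (by linarith)
end

section
/- Suppose (x_t, y_t, z_t) solves ẋ = −(θ/δ) y z, ẏ = (θ/δ) x z, ż = 0 with θ ≠ 0, δ > 0, and initial condition of norm at most 1 satisfying max(|x₀|,|y₀|) ≥ c₀ and |z₀| ≥ c₁δ for constants c₀, c₁ > 0. Let τ ~ Exp(1/h), h ∈ (0,1). Then there is q = q(c₀, c₁, θ, h) > 0 independent of δ such that with probability at least q, min(|x_τ|, |y_τ|) ≥ c₀/2. -/
/-!
Since `z` is constant, `(x, y)` rotates with angular speed `ω = θ z₀ / δ`, where `|ω| ≥ |θ| c₁`,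
on a circle of radius `ρ ≥ max (|x₀|, |y₀|) ≥ c₀`. Both coordinates have absolute value at least
`ρ / 2` whenever `|cos (2 (ω t + φ₀))| ≤ 1 / 2`, and this holds on a third of every period
`P = π / (2 |ω|)`. By the geometric decay of the exponential law over consecutive periods, an
`Exp(r)` time falls into such a set with probability at least `exp (-r P) / 3`, and
`P ≤ π / (2 |θ| c₁)` uniformly in `δ`.
-/

open Real MeasureTheory ProbabilityTheory Set
open Complex (I arg)

lemma eq_mul_exp_of_hasDerivAt {u : ℝ → ℂ} {c : ℂ} (hu : ∀ t, HasDerivAt u (c * u t) t)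
    (t : ℝ) : u t = u 0 * Complex.exp (c * t) := by
  have hexp : ∀ s : ℝ,
      HasDerivAt (fun s : ℝ => Complex.exp (-(c * s))) (-c * Complex.exp (-(c * s))) s := by
    intro s
    simpa [mul_comm] using (((hasDerivAt_id (s : ℂ)).const_mul (-c)).cexp).comp_ofReal
  have hderiv : ∀ s, HasDerivAt (fun s => u s * Complex.exp (-(c * s))) 0 s := fun s =>
    ((hu s).mul (hexp s)).congr_deriv (by ring)
  have hconst := is_const_of_deriv_eq_zero (fun s => (hderiv s).differentiableAt)
    (fun s => (hderiv s).deriv) t 0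
  simp only [Complex.ofReal_zero, mul_zero, neg_zero, Complex.exp_zero, mul_one] at hconst
  rw [← hconst, mul_assoc, ← Complex.exp_add, neg_add_cancel, Complex.exp_zero, mul_one]

lemma re_mul_exp_mul_I (z : ℂ) (ψ : ℝ) :
    (z * Complex.exp (ψ * I)).re = ‖z‖ * cos (ψ + arg z) := by
  conv_lhs => rw [← Complex.norm_mul_exp_arg_mul_I z]
  rw [mul_assoc, ← Complex.exp_add, ← add_mul, ← Complex.ofReal_add, Complex.re_ofReal_mul,
    Complex.exp_ofReal_mul_I_re, add_comm]

lemma im_mul_exp_mul_I (z : ℂ) (ψ : ℝ) :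
    (z * Complex.exp (ψ * I)).im = ‖z‖ * sin (ψ + arg z) := by
  conv_lhs => rw [← Complex.norm_mul_exp_arg_mul_I z]
  rw [mul_assoc, ← Complex.exp_add, ← add_mul, ← Complex.ofReal_add, Complex.im_ofReal_mul,
    Complex.exp_ofReal_mul_I_im, add_comm]

lemma rotation_eq_polar {ω : ℝ} {x y : ℝ → ℝ} (hx : ∀ t, HasDerivAt x (-(ω * y t)) t)
    (hy : ∀ t, HasDerivAt y (ω * x t) t) (t : ℝ) :
    x t = ‖(x 0 + y 0 * I : ℂ)‖ * cos (ω * t + arg (x 0 + y 0 * I)) ∧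
      y t = ‖(x 0 + y 0 * I : ℂ)‖ * sin (ω * t + arg (x 0 + y 0 * I)) := by
  set u : ℝ → ℂ := fun t => x t + y t * I
  have hu : ∀ t, HasDerivAt u (ω * I * u t) t := fun t =>
    ((hx t).ofReal_comp.add ((hy t).ofReal_comp.mul_const I)).congr_deriv
      (by push_cast; linear_combination (-(ω * y t : ℂ)) * Complex.I_sq)
  have hut := eq_mul_exp_of_hasDerivAt hu t
  rw [show (ω * I * t : ℂ) = (ω * t : ℝ) * I by push_cast; ring] at hut
  constructor
  · simpa [u] using (congrArg Complex.re hut).trans (re_mul_exp_mul_I (u 0) (ω * t))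
  · simpa [u] using (congrArg Complex.im hut).trans (im_mul_exp_mul_I (u 0) (ω * t))

lemma abs_cos_le_half_of_mem_Icc {s : ℝ} (hs : s ∈ Icc (π / 3) (2 * π / 3)) :
    |cos s| ≤ 1 / 2 := by
  have hcos₁ : cos s ≤ cos (π / 3) :=
    cos_le_cos_of_nonneg_of_le_pi (by positivity) (by linarith [hs.2, pi_pos]) hs.1
  have hcos₂ : cos (2 * π / 3) ≤ cos s :=
    cos_le_cos_of_nonneg_of_le_pi (by linarith [hs.1, pi_pos]) (by linarith [pi_pos]) hs.2
  have hcos_two_pi_div_three : cos (2 * π / 3) = -(1 / 2) := by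
    rw [show 2 * π / 3 = π - π / 3 by ring, cos_pi_sub, cos_pi_div_three]
  rw [cos_pi_div_three] at hcos₁
  exact abs_le.mpr ⟨by linarith, hcos₁⟩

lemma abs_cos_add_int_mul_pi (s : ℝ) (k : ℤ) : |cos (s + k * π)| = |cos s| := by
  rw [cos_add_int_mul_pi, abs_mul, abs_neg_one_zpow, one_mul]

lemma half_le_min_abs_cos_abs_sin {ψ : ℝ} (hψ : |cos (2 * ψ)| ≤ 1 / 2) :
    1 / 2 ≤ min |cos ψ| |sin ψ| := by
  have hb := abs_le.mp hψ
  rw [cos_two_mul] at hb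
  have := sin_sq_add_cos_sq ψ
  refine le_min ?_ ?_
  · nlinarith [sq_abs (cos ψ), abs_nonneg (cos ψ)]
  · nlinarith [sq_abs (sin ψ), abs_nonneg (sin ψ)]

lemma half_le_min_abs_mul_cos_abs_mul_sin {c ρ ψ : ℝ} (hc : 0 ≤ c) (hρ : c ≤ ρ)
    (hψ : |cos (2 * ψ)| ≤ 1 / 2) : c / 2 ≤ min |ρ * cos ψ| |ρ * sin ψ| := by
  obtain ⟨hcos, hsin⟩ := le_min_iff.mp (half_le_min_abs_cos_abs_sin hψ)
  rw [abs_mul, abs_mul, abs_of_nonneg (hc.trans hρ), le_min_iff, ← mul_one_div c]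
  exact ⟨mul_le_mul hρ hcos (by norm_num) (hc.trans hρ),
    mul_le_mul hρ hsin (by norm_num) (hc.trans hρ)⟩

lemma expMeasure_Ioc {r a b : ℝ} (hr : 0 < r) (ha : 0 ≤ a) (hab : a ≤ b) :
    expMeasure r (Ioc a b) = ENNReal.ofReal (exp (-(r * a)) - exp (-(r * b))) := by
  have := isProbabilityMeasure_expMeasure hr
  rw [← measure_cdf (expMeasure r), StieltjesFunction.measure_Ioc, cdf_expMeasure_eq hr,
    cdf_expMeasure_eq hr, if_pos ha, if_pos (ha.trans hab)]
  ring_nf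

lemma expMeasure_iUnion_Ioc {r a P L : ℝ} (hr : 0 < r) (ha : 0 ≤ a) (hP : 0 < P) (hL : 0 ≤ L)
    (hLP : L ≤ P) :
    expMeasure r (⋃ n : ℕ, Ioc (a + n * P) (a + n * P + L)) =
      ENNReal.ofReal (exp (-(r * a)) * (1 - exp (-(r * L))) / (1 - exp (-(r * P)))) := by
  set u := exp (-(r * P))
  have hu₀ : 0 ≤ u := (exp_pos _).le
  have hu₁ : u < 1 := exp_lt_one_iff.mpr (by nlinarith)
  have hC : 0 ≤ exp (-(r * a)) * (1 - exp (-(r * L))) :=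
    mul_nonneg (exp_pos _).le (sub_nonneg.mpr (exp_le_one_iff.mpr (by nlinarith)))
  have hdisj := (pairwise_disjoint_on fun n : ℕ => Ioc (a + n * P) (a + n * P + L)).mpr
    fun m n hmn => Ioc_disjoint_Ioc_of_le <| by
      have : (m : ℝ) + 1 ≤ n := by exact_mod_cast hmn
      nlinarith
  have hterm : ∀ n : ℕ, expMeasure r (Ioc (a + n * P) (a + n * P + L)) =
      ENNReal.ofReal (exp (-(r * a)) * (1 - exp (-(r * L))) * u ^ n) := by
    intro n
    rw [expMeasure_Ioc hr (by positivity) (by linarith), ← exp_nat_mul, mul_sub, mul_one,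
      sub_mul, ← exp_add, ← exp_add, ← exp_add]
    congr 3 <;> ring
  rw [measure_iUnion hdisj fun _ => measurableSet_Ioc, tsum_congr hterm,
    ← ENNReal.ofReal_tsum_of_nonneg (fun n => mul_nonneg hC (pow_nonneg hu₀ n))
      ((summable_geometric_of_lt_one hu₀ hu₁).mul_left _),
    tsum_mul_left, tsum_geometric_of_lt_one hu₀ hu₁, div_eq_mul_inv]

lemma ofReal_exp_div_three_le_expMeasure_iUnion_Ioc {r a P : ℝ} (hr : 0 < r) (ha : 0 ≤ a)
    (hP : 0 < P) :
    ENNReal.ofReal (exp (-(r * a)) / 3) ≤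
      expMeasure r (⋃ n : ℕ, Ioc (a + n * P) (a + n * P + P / 3)) := by
  rw [expMeasure_iUnion_Ioc hr ha hP (by positivity) (by linarith)]
  refine ENNReal.ofReal_le_ofReal ?_
  set v := exp (-(r * (P / 3)))
  have hv₀ : 0 < v := exp_pos _
  have hv₁ : v < 1 := exp_lt_one_iff.mpr (by nlinarith)
  have hcube : exp (-(r * P)) = v ^ 3 := by rw [← exp_nat_mul]; congr 1; push_cast; ring
  -- `(1 - v) / (1 - v ^ 3) = 1 / (1 + v + v ^ 2) ≥ 1 / 3`
  rw [hcube, le_div_iff₀ (sub_pos.mpr (pow_lt_one₀ hv₀.le hv₁ three_ne_zero))]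
  nlinarith [mul_nonneg (exp_pos (-(r * a))).le (mul_nonneg (sq_nonneg (1 - v)) hv₀.le)]

lemma ofReal_exp_div_three_le_expMeasure_abs_cos_le_half {r w : ℝ} (φ : ℝ) (hr : 0 < r)
    (hw : w ≠ 0) :
    ENNReal.ofReal (exp (-(r * (π / |w|))) / 3) ≤
      expMeasure r {t | |cos (w * t + φ)| ≤ 1 / 2} := by
  wlog hw_pos : 0 < w generalizing w φ
  · have hneg := this (-φ) (neg_ne_zero.mpr hw) (neg_pos.mpr (hw.lt_or_gt.resolve_right hw_pos))
    simp only [abs_neg, neg_mul, ← neg_add, cos_neg] at hneg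
    exact hneg
  rw [abs_of_pos hw_pos]
  set P := π / w
  have hP : 0 < P := div_pos pi_pos hw_pos
  have hwP : w * P = π := mul_div_cancel₀ π hw
  -- the first time `t ≥ 0` at which the phase `w * t + φ` is `≡ π / 3 (mod π)`
  set a := toIcoMod pi_pos 0 (π / 3 - φ) / w
  have hwa : w * a = π / 3 - φ - toIcoDiv pi_pos 0 (π / 3 - φ) * π := by
    rw [mul_div_cancel₀ _ hw, ← self_sub_toIcoMod_eq_mul, sub_sub_cancel]
  have ha : a ∈ Icc 0 P := by
    obtain ⟨h₀, h₁⟩ := toIcoMod_mem_Ico pi_pos 0 (π / 3 - φ)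
    rw [zero_add] at h₁
    exact ⟨div_nonneg h₀ hw_pos.le, div_le_div_of_nonneg_right h₁.le hw_pos.le⟩
  have hsub : ⋃ n : ℕ, Ioc (a + n * P) (a + n * P + P / 3) ⊆
      {t | |cos (w * t + φ)| ≤ 1 / 2} := by
    intro t ht
    obtain ⟨n, htn⟩ := mem_iUnion.mp ht
    have hphase : w * t + φ = (w * (t - a - n * P) + π / 3) +
        ((n - toIcoDiv pi_pos 0 (π / 3 - φ) : ℤ) : ℝ) * π := by
      push_cast
      linear_combination hwa + n * hwP
    have hs : w * (t - a - n * P) ∈ Ioc 0 (π / 3) := by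
      constructor
      · exact mul_pos hw_pos (by linarith [htn.1])
      · rw [← hwP]; nlinarith [htn.2]
    rw [mem_ofPred_eq, hphase, abs_cos_add_int_mul_pi]
    exact abs_cos_le_half_of_mem_Icc ⟨by linarith [hs.1], by linarith [hs.2]⟩
  calc ENNReal.ofReal (exp (-(r * P)) / 3)
      ≤ ENNReal.ofReal (exp (-(r * a)) / 3) := by gcongr; exact ha.2
    _ ≤ expMeasure r (⋃ n : ℕ, Ioc (a + n * P) (a + n * P + P / 3)) :=
      ofReal_exp_div_three_le_expMeasure_iUnion_Ioc hr ha.1 hP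
    _ ≤ expMeasure r {t | |cos (w * t + φ)| ≤ 1 / 2} := measure_mono hsub

/-- Lemma 5.4 (thermalization for the degenerate triad `|j| = |k|`): for the
rotation system `ẋ = −(θ/δ)yz, ẏ = (θ/δ)xz, ż = 0` with initial condition of
norm at most 1 satisfying `max(|x₀|,|y₀|) ≥ c₀` and `|z₀| ≥ c₁δ`, and
`τ ~ Exp(1/h)`, there is `q > 0` depending only on `c₀, c₁, θ, h` (not on `δ`)
such that `min(|x_τ|, |y_τ|) ≥ c₀/2` with probability at least `q`. -/
theorem spinner_thermalization (c₀ c₁ θ h : ℝ)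
    (hc₀ : 0 < c₀) (hc₁ : 0 < c₁) (hθ : θ ≠ 0) (hh : h ∈ Set.Ioo (0:ℝ) 1) :
    ∃ q : ℝ, 0 < q ∧
      ∀ (δ : ℝ), 0 < δ →
      ∀ (x y z : ℝ → ℝ),
        (∀ t, HasDerivAt x (-(θ / δ) * y t * z t) t) →
        (∀ t, HasDerivAt y ((θ / δ) * x t * z t) t) →
        (∀ t, HasDerivAt z 0 t) →
        x 0 ^ 2 + y 0 ^ 2 + z 0 ^ 2 ≤ 1 →
        max |x 0| |y 0| ≥ c₀ →
        |z 0| ≥ c₁ * δ →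
        ENNReal.ofReal q ≤
          expMeasure (1 / h) {t : ℝ | c₀ / 2 ≤ min |x t| |y t|} := by
  have hr : 0 < 1 / h := one_div_pos.mpr hh.1
  refine ⟨exp (-(1 / h * (π / (2 * (|θ| * c₁))))) / 3, by positivity, ?_⟩
  intro δ hδ x y z hx hy hz _ hmax hz₀
  have hz_const (t : ℝ) : z t = z 0 :=
    is_const_of_deriv_eq_zero (fun s => (hz s).differentiableAt) (fun s => (hz s).deriv) t 0
  set ω := θ / δ * z 0
  have hpolar := rotation_eq_polar (ω := ω)
    (fun t => (hx t).congr_deriv (by rw [hz_const]; ring))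
    (fun t => (hy t).congr_deriv (by rw [hz_const]; ring))
  set ρ := ‖(x 0 + y 0 * I : ℂ)‖
  have hρ : c₀ ≤ ρ := hmax.trans <| max_le
    (by simpa using Complex.abs_re_le_norm (x 0 + y 0 * I))
    (by simpa using Complex.abs_im_le_norm (x 0 + y 0 * I))
  have hω : |θ| * c₁ ≤ |ω| := by
    rw [abs_mul, abs_div, abs_of_pos hδ, div_mul_eq_mul_div, le_div_iff₀ hδ, mul_assoc]
    gcongr
  have hgood : {t | |cos (2 * ω * t + 2 * arg (x 0 + y 0 * I))| ≤ 1 / 2} ⊆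
      {t | c₀ / 2 ≤ min |x t| |y t|} := by
    intro t ht
    rw [mem_ofPred_eq, (hpolar t).1, (hpolar t).2]
    exact half_le_min_abs_mul_cos_abs_mul_sin hc₀.le hρ (by rwa [mul_add, ← mul_assoc])
  calc ENNReal.ofReal (exp (-(1 / h * (π / (2 * (|θ| * c₁))))) / 3)
      ≤ ENNReal.ofReal (exp (-(1 / h * (π / |2 * ω|))) / 3) := by
        rw [abs_mul, abs_two]; gcongr
    _ ≤ _ := ofReal_exp_div_three_le_expMeasure_abs_cos_le_half _ hr
        (mul_ne_zero two_ne_zero (abs_pos.mp ((by positivity : 0 < |θ| * c₁).trans_le hω)))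
    _ ≤ _ := measure_mono hgood
end

section
/- (Partial dissipation estimate for the Euler splitting damping flow.) Let Λ be the diagonal linear map on ℝ^d with eigenvalues λ_j ≥ 0, and suppose λ_j ≥ λ > 0 for all j in a nonempty set D of indices. Let H(q) = |q| + 1 and D_η = {q : Σ_{j∈D} q_j² ≥ η|q|²} for η ∈ (0,1). Then for every q ∈ D_η and t ≥ 0: |e^{−Λt} q| + 1 ≤ √((e^{−λt} − 1)η + 1)·H(q) + 1; in particular H(e^{−Λt}q) ≤ α(t)H(q) + 1 with α(t) = √(1 − η(1 − e^{−λt})) strictly decreasing from 1. -/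
open Real

/-- The Euclidean norm on `ℝ^d` (viewed as `Fin d → ℝ`). -/
noncomputable def eucNorm {d : ℕ} (q : Fin d → ℝ) : ℝ :=
  Real.sqrt (∑ i, q i ^ 2)

/-- Lemma 5.1(ii) (partial dissipation for the damping flow of the Euler
splitting): with `H(q) = |q| + 1`, a diagonal damping `Λ = diag(λ_j)` with
`λ_j ≥ λ > 0` on a nonempty set `D` of indices, and
`q ∈ D_η = {Σ_{j∈D} q_j² ≥ η|q|²}`, one has for all `t ≥ 0`
`|e^{−Λt}q| + 1 ≤ √((e^{−λt} − 1)η + 1) H(q) + 1`, where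
`α(t) = √(1 − η(1 − e^{−λt}))` is strictly decreasing with `α(0) = 1`. -/
theorem euler_damping_partial_dissipation (d : ℕ)
    (lam : Fin d → ℝ) (hlamnn : ∀ j, 0 ≤ lam j)
    (D : Finset (Fin d)) (hD : D.Nonempty)
    (l : ℝ) (hl : 0 < l) (hlD : ∀ j ∈ D, l ≤ lam j)
    (η : ℝ) (hη : η ∈ Set.Ioo (0:ℝ) 1)
    (q : Fin d → ℝ) (hq : η * (eucNorm q) ^ 2 ≤ ∑ j ∈ D, q j ^ 2) :
    (∀ t : ℝ, 0 ≤ t →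
        eucNorm (fun j => Real.exp (-lam j * t) * q j) + 1 ≤
          Real.sqrt ((Real.exp (-l * t) - 1) * η + 1) * (eucNorm q + 1) + 1) ∧
    StrictAntiOn (fun t => Real.sqrt (1 - η * (1 - Real.exp (-l * t))))
      (Set.Ici (0:ℝ)) ∧
    Real.sqrt (1 - η * (1 - Real.exp (-l * 0))) = 1 := by
  obtain ⟨hη0, hη1⟩ := hη
  have hsumnn : (0:ℝ) ≤ ∑ i, q i ^ 2 := Finset.sum_nonneg fun i _ => sq_nonneg _
  have hN : eucNorm q ^ 2 = ∑ i, q i ^ 2 := Real.sq_sqrt hsumnn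
  refine ⟨?_, ?_, ?_⟩
  · intro t ht
    set c := (Real.exp (-l * t) - 1) * η + 1 with hc
    have hex : Real.exp (-l * t) ≤ 1 := Real.exp_le_one_iff.mpr (by nlinarith)
    have hcpos : 0 < c := by nlinarith [Real.exp_pos (-l * t)]
    have hsplit : ∑ i ∈ D, (Real.exp (-lam i * t) * q i) ^ 2 +
        ∑ i ∈ Dᶜ, (Real.exp (-lam i * t) * q i) ^ 2 =
        ∑ i, (Real.exp (-lam i * t) * q i) ^ 2 :=
      Finset.sum_add_sum_compl D _
    have h1 : ∑ i ∈ D, (Real.exp (-lam i * t) * q i) ^ 2 ≤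
        Real.exp (-l * t) * ∑ i ∈ D, q i ^ 2 := by
      rw [Finset.mul_sum]
      apply Finset.sum_le_sum
      intro i hi
      have h2 : Real.exp (-lam i * t) ^ 2 = Real.exp (-(2 * lam i) * t) := by
        rw [← Real.exp_nat_mul]; ring_nf
      have hle : Real.exp (-(2 * lam i) * t) ≤ Real.exp (-l * t) := by
        apply Real.exp_le_exp.mpr
        have := hlD i hi
        nlinarith
      calc (Real.exp (-lam i * t) * q i) ^ 2
          = Real.exp (-(2 * lam i) * t) * q i ^ 2 := by rw [mul_pow, h2]
        _ ≤ Real.exp (-l * t) * q i ^ 2 := by nlinarith [sq_nonneg (q i)]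
    have h2 : ∑ i ∈ Dᶜ, (Real.exp (-lam i * t) * q i) ^ 2 ≤ ∑ i ∈ Dᶜ, q i ^ 2 := by
      apply Finset.sum_le_sum
      intro i _
      have he1 : Real.exp (-lam i * t) ≤ 1 :=
        Real.exp_le_one_iff.mpr (by nlinarith [hlamnn i])
      have he0 : 0 < Real.exp (-lam i * t) := Real.exp_pos _
      rw [mul_pow]
      have hsq1 : Real.exp (-lam i * t) ^ 2 ≤ 1 := by nlinarith
      nlinarith [sq_nonneg (q i)]
    have hDsum : ∑ i ∈ D, q i ^ 2 + ∑ i ∈ Dᶜ, q i ^ 2 = ∑ i, q i ^ 2 :=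
      Finset.sum_add_sum_compl D _
    have hkey : ∑ i, (Real.exp (-lam i * t) * q i) ^ 2 ≤ c * ∑ i, q i ^ 2 := by
      rw [← hsplit, ← hN] at *
      nlinarith [hq]
    have hsq : eucNorm (fun j => Real.exp (-lam j * t) * q j) ≤
        Real.sqrt c * eucNorm q := by
      rw [eucNorm, eucNorm, ← Real.sqrt_mul hcpos.le]
      exact Real.sqrt_le_sqrt hkey
    have hsc : 0 ≤ Real.sqrt c := Real.sqrt_nonneg _
    nlinarith [hsq]
  · intro a ha b hb hab
    simp only
    have hb' : (0:ℝ) ≤ b := hb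
    apply Real.sqrt_lt_sqrt
    · nlinarith [Real.exp_pos (-l * b)]
    · have : Real.exp (-l * b) < Real.exp (-l * a) := by
        apply Real.exp_lt_exp.mpr; nlinarith
      nlinarith
  · norm_num
end
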